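/- arXiv:2105.15060 — 3 statements merged into one kernel-verified Lean document; each statement's English description precedes it below -/
import Mathlib

section
/- Fix T > 0, a finite N ∈ ℕ, positive reals (l_n)_{n=1}^N with Σ_{n=1}^N l_n = T, and two sequences of reals h = (h_n)_{n=1}^N and h' = (h'_n)_{n=1}^N. Let F_{l,h} and F_{l,h'} be the piecewise linear convex functions built from (l,h) and (l,h') via the formula F_{l,h}(t) := Σ_{n=1}^N h_n min{(t − a_n)^+/l_n, 1} with a_n := Σ_{k=1}^N l_k·1{h_k/l_k < h_n/l_n} + Σ_{k=1}^{n−1} l_k·1{h_k/l_k = h_n/l_n}, and a'_n defined analogously from h'. Define G_{l,h,h'}(t) := Σ_{n=1}^N h_n min{(t − a'_n)^+/l_n, 1} for t ∈ [0,T]. Then max{ ‖F_{l,h} − F_{l,h'}‖_∞, ‖F_{l,h'} − G_{l,h,h'}‖_∞ } ≤ max{ Σ_{n=1}^N (h_n − h'_n)^+, Σ_{n=1}^N (h'_n − h_n)^+ }, where ‖f‖_∞ := sup_{t∈[0,T]} |f(t)| and x^+ := max{x,0}. -/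
/-!
Laying the faces end to end in increasing order of slope `u n / l n` (ties by index) gives
`F_{l,u}`; by the bathtub principle this arrangement minimizes `∑ u n · φ n`, where `φ n ∈ [0,1]`
is the covered fraction of face `n` at time `t`, over all arrangements. Hence
`F_{l,u} ≤ G_{l,u,g}` for every `g`, while `G_{l,h,g} - G_{l,h',g} = ∑ (h n - h' n) φ n` lies
between `-∑ (h' n - h n)⁺` and `∑ (h n - h' n)⁺`. For instance
`F_{l,h} - F_{l,h'} ≤ G_{l,h,h'} - G_{l,h',h'} ≤ ∑ (h n - h' n)⁺`; the other three one-sided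
bounds are alike.
-/

open Filter Set
open scoped ENNReal

noncomputable section

/-- Left endpoint `a n` of the face of index `n` (among indices `n` with `(n : ℕ∞) < N`):
the total length of faces of strictly smaller slope plus the lengths of earlier faces of
equal slope. -/
def leftPt (N : ℕ∞) (l h : ℕ → ℝ) (n : ℕ) : ℝ :=
  (∑' k : ℕ, if (k : ℕ∞) < N ∧ h k / l k < h n / l n then l k else 0)
  + ∑ k ∈ Finset.range n, (if (k : ℕ∞) < N ∧ h k / l k = h n / l n then l k else 0)

/-- The piecewise linear convex function on `[0,T]` whose faces have lengths `l n` and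
heights `h n` for `(n : ℕ∞) < N`. -/
def FLH (N : ℕ∞) (l h : ℕ → ℝ) (t : ℝ) : ℝ :=
  ∑' n : ℕ, if (n : ℕ∞) < N then h n * min (max (t - leftPt N l h n) 0 / l n) 1 else 0

open Finset Function

/-- The length of `[a, a + L] ∩ (-∞, t]` (for `0 ≤ L`). -/
def ramp (a L t : ℝ) : ℝ := min (max (t - a) 0) L

lemma ramp_of_add_le {a L t : ℝ} (hL : 0 ≤ L) (h : a + L ≤ t) : ramp a L t = L := by
  unfold ramp
  rw [max_eq_left (by linarith), min_eq_right (by linarith)]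

lemma ramp_of_le {a L t : ℝ} (hL : 0 ≤ L) (h : t ≤ a) : ramp a L t = 0 := by
  unfold ramp
  rw [max_eq_right (by linarith), min_eq_left hL]

lemma ramp_nonneg {a L t : ℝ} (hL : 0 ≤ L) : 0 ≤ ramp a L t :=
  le_min (le_max_right _ _) hL

lemma ramp_le (a L t : ℝ) : ramp a L t ≤ L := min_le_right _ _

lemma ramp_add_ramp_zero {L x : ℝ} (hL : 0 ≤ L) (hx : 0 ≤ x) (t : ℝ) :
    ramp L x t + ramp 0 L t = ramp 0 (L + x) t := by
  unfold ramp
  rcases le_total t 0 with h1 | h1 <;> rcases le_total t L with h2 | h2 <;>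
    rcases le_total t (L + x) with h3 | h3 <;>
    simp only [min_def, max_def] <;> split_ifs <;> linarith

section Layout

variable {ι α : Type*} [LinearOrder α] (l : ι → ℝ) (key : ι → α)

def faceStart (A : Finset ι) (n : ι) : ℝ := ∑ k ∈ A with key k < key n, l k

variable {l key} {A : Finset ι}

lemma faceStart_add_le (hl : ∀ n ∈ A, 0 ≤ l n) {k n : ι} (hk : k ∈ A) (hkn : key k < key n) :
    faceStart l key A k + l k ≤ faceStart l key A n := by
  classical
  have hk' : k ∉ A.filter (fun j => key j < key k) := by simp
  rw [faceStart, add_comm, ← sum_insert hk']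
  refine sum_le_sum_of_subset_of_nonneg ?_ fun j hj _ => hl j (mem_filter.1 hj).1
  intro j hj
  rcases mem_insert.1 hj with rfl | hj
  · exact mem_filter.2 ⟨hk, hkn⟩
  · exact mem_filter.2 ⟨(mem_filter.1 hj).1, (mem_filter.1 hj).2.trans hkn⟩

/-- The faces laid out in `key` order tile `[0, ∑ l]`. -/
theorem sum_ramp_faceStart (hkey : Injective key) (hl : ∀ n ∈ A, 0 ≤ l n) (t : ℝ) :
    ∑ n ∈ A, ramp (faceStart l key A n) (l n) t = ramp 0 (∑ n ∈ A, l n) t := by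
  classical
  induction A using Finset.induction_on_max_value key with
  | empty => simp [ramp]
  | insert a A ha hmax ih =>
    have hlt : ∀ x ∈ A, key x < key a := fun x hx =>
      (hmax x hx).lt_of_ne fun h => ha (hkey h ▸ hx)
    have hA : ∀ n ∈ A, faceStart l key (insert a A) n = faceStart l key A n := fun n hn => by
      rw [faceStart, filter_insert, if_neg (hlt n hn).not_gt, faceStart]
    have ha' : faceStart l key (insert a A) a = ∑ n ∈ A, l n := by
      rw [faceStart, filter_insert, if_neg (lt_irrefl _), filter_true_of_mem hlt]
    have hlA : ∀ n ∈ A, 0 ≤ l n := fun n hn => hl n (mem_insert_of_mem hn)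
    rw [sum_insert ha, sum_insert ha, sum_congr rfl fun n hn => by rw [hA n hn], ih hlA, ha',
      add_comm (l a)]
    exact ramp_add_ramp_zero (sum_nonneg hlA) (hl a (mem_insert_self a A)) t

lemma exists_pivot (hl : ∀ n ∈ A, 0 ≤ l n) (hA : A.Nonempty) (t : ℝ) :
    ∃ p ∈ A, ∀ n ∈ A, (key n < key p → ramp (faceStart l key A n) (l n) t = l n) ∧
      (key p < key n → ramp (faceStart l key A n) (l n) t = 0) := by
  classical
  have hempty : ∀ n ∈ A, ¬ faceStart l key A n < t → ramp (faceStart l key A n) (l n) t = 0 :=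
    fun n hn h => ramp_of_le (hl n hn) (not_lt.1 h)
  rcases (A.filter fun n => faceStart l key A n < t).eq_empty_or_nonempty with hS | hS
  · obtain ⟨p, hp, hmin⟩ := exists_min_image A key hA
    refine ⟨p, hp, fun n hn => ⟨fun h => absurd (hmin n hn) (not_le.2 h), fun _ => ?_⟩⟩
    exact hempty n hn fun h => (filter_eq_empty_iff.1 hS) hn h
  · obtain ⟨p, hp, hmax⟩ := exists_max_image _ key hS
    rw [mem_filter] at hp
    refine ⟨p, hp.1, fun n hn => ⟨fun h => ?_, fun h => ?_⟩⟩
    · exact ramp_of_add_le (hl n hn) ((faceStart_add_le hl hn h).trans hp.2.le)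
    · exact hempty n hn fun h' => absurd (hmax n (mem_filter.2 ⟨hn, h'⟩)) (not_le.2 h)

end Layout

/-- Bathtub principle: filling the cheapest capacity first minimizes the cost. -/
theorem sum_mul_le_sum_mul_of_threshold {ι : Type*} {A : Finset ι} {s m m' l : ι → ℝ} {σ : ℝ}
    (hfull : ∀ n ∈ A, s n < σ → m n = l n) (hempty : ∀ n ∈ A, σ < s n → m n = 0)
    (h0 : ∀ n ∈ A, 0 ≤ m' n) (hle : ∀ n ∈ A, m' n ≤ l n)
    (hsum : ∑ n ∈ A, m n = ∑ n ∈ A, m' n) :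
    ∑ n ∈ A, s n * m n ≤ ∑ n ∈ A, s n * m' n := by
  have hterm : ∑ n ∈ A, (s n - σ) * (m n - m' n) ≤ 0 := by
    refine sum_nonpos fun n hn => ?_
    rcases lt_trichotomy (s n) σ with h | h | h
    · rw [hfull n hn h]; nlinarith [hle n hn]
    · simp [h]
    · rw [hempty n hn h]; nlinarith [h0 n hn]
  simp only [sub_mul, mul_sub, sum_sub_distrib, ← mul_sum, hsum] at hterm
  linarith

theorem sum_mul_ramp_faceStart_le {ι α : Type*} [LinearOrder α] {l s m : ι → ℝ} {key : ι → α}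
    {A : Finset ι} (hkey : Injective key) (hs : ∀ i j, key i ≤ key j → s i ≤ s j)
    (hl : ∀ n ∈ A, 0 ≤ l n) (t : ℝ) (h0 : ∀ n ∈ A, 0 ≤ m n) (hle : ∀ n ∈ A, m n ≤ l n)
    (hsum : ∑ n ∈ A, m n = ramp 0 (∑ n ∈ A, l n) t) :
    ∑ n ∈ A, s n * ramp (faceStart l key A n) (l n) t ≤ ∑ n ∈ A, s n * m n := by
  rcases A.eq_empty_or_nonempty with rfl | hA
  · simp
  obtain ⟨p, -, hp⟩ := exists_pivot (key := key) hl hA t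
  refine sum_mul_le_sum_mul_of_threshold (σ := s p) (fun n hn h => (hp n hn).1 ?_)
    (fun n hn h => (hp n hn).2 ?_) h0 hle (by rw [sum_ramp_faceStart hkey hl, hsum])
  · exact lt_of_not_ge fun h' => (hs p n h').not_gt h
  · exact lt_of_not_ge fun h' => (hs n p h').not_gt h

lemma sum_mul_le_sum_max_zero {ι : Type*} {A : Finset ι} {c φ : ι → ℝ}
    (h0 : ∀ n ∈ A, 0 ≤ φ n) (h1 : ∀ n ∈ A, φ n ≤ 1) :
    ∑ n ∈ A, c n * φ n ≤ ∑ n ∈ A, max (c n) 0 := by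
  refine sum_le_sum fun n hn => ?_
  rcases le_total (c n) 0 with hc | hc
  · exact (mul_nonpos_of_nonpos_of_nonneg hc (h0 n hn)).trans (le_max_right _ _)
  · exact (mul_le_of_le_one_right hc (h1 n hn)).trans (le_max_left _ _)

lemma mul_min_div_one {L : ℝ} (hL : 0 < L) (c x : ℝ) : c * min (x / L) 1 = c / L * min x L := by
  rw [← div_self hL.ne', min_div_div_right hL.le]
  ring

lemma tsum_ite_natCast_lt (N : ℕ) (f : ℕ → ℝ) :
    ∑' k : ℕ, (if (k : ℕ∞) < N then f k else 0) = ∑ k ∈ range N, f k := by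
  rw [tsum_eq_sum (s := range N) fun k hk => if_neg fun h => hk (mem_range.2 (by exact_mod_cast h))]
  exact sum_congr rfl fun k hk => if_pos (by exact_mod_cast mem_range.1 hk)

section FLH

variable {N : ℕ} {l : ℕ → ℝ}

def slopeKey (l h : ℕ → ℝ) (k : ℕ) : ℝ ×ₗ ℕ := toLex (h k / l k, k)

lemma slopeKey_injective (l h : ℕ → ℝ) : Injective (slopeKey l h) :=
  fun _ _ e => congrArg Prod.snd (toLex.injective e)

lemma div_le_div_of_slopeKey_le {h : ℕ → ℝ} {i j : ℕ} (hij : slopeKey l h i ≤ slopeKey l h j) :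
    h i / l i ≤ h j / l j := by
  rcases Prod.Lex.toLex_le_toLex.1 hij with h' | ⟨h', -⟩
  exacts [h'.le, h'.le]

lemma leftPt_eq_faceStart (h : ℕ → ℝ) {n : ℕ} (hn : n < N) :
    leftPt N l h n = faceStart l (slopeKey l h) (range N) n := by
  have hties : ∑ k ∈ range n, (if (k : ℕ∞) < N ∧ h k / l k = h n / l n then l k else 0)
      = ∑ k ∈ range N, if h k / l k = h n / l n ∧ k < n then l k else 0 := by
    rw [← sum_range_add_sum_Ico _ hn.le, sum_eq_zero (s := Ico n N)
      fun k hk => if_neg fun h' => (mem_Ico.1 hk).1.not_gt h'.2, add_zero]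
    refine sum_congr rfl fun k hk => ?_
    have hkn := mem_range.1 hk
    simp only [hkn, and_true, show (k : ℕ∞) < N by exact_mod_cast hkn.trans hn, true_and]
  rw [leftPt, faceStart, sum_filter, hties]
  simp only [ite_and, tsum_ite_natCast_lt, ← sum_add_distrib]
  refine sum_congr rfl fun k _ => ?_
  simp only [slopeKey, Prod.Lex.toLex_lt_toLex]
  grind

/-- `G_{l,u,g}`: the faces of `F_{l,g}`, with heights `u`. -/
def hybridFLH (N : ℕ) (l u g : ℕ → ℝ) (t : ℝ) : ℝ :=
  ∑ n ∈ range N, u n * min (max (t - leftPt N l g n) 0 / l n) 1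

lemma FLH_eq_hybridFLH (l h : ℕ → ℝ) (t : ℝ) : FLH N l h t = hybridFLH N l h h t :=
  tsum_ite_natCast_lt N _

lemma hybridFLH_eq_sum_ramp (hl : ∀ n < N, 0 < l n) (u g : ℕ → ℝ) (t : ℝ) :
    hybridFLH N l u g t
      = ∑ n ∈ range N, u n / l n * ramp (faceStart l (slopeKey l g) (range N) n) (l n) t :=
  sum_congr rfl fun n hn => by
    rw [mul_min_div_one (hl n (mem_range.1 hn)), leftPt_eq_faceStart g (mem_range.1 hn), ramp]

theorem FLH_le_hybridFLH (hl : ∀ n < N, 0 < l n) (u g : ℕ → ℝ) (t : ℝ) :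
    FLH N l u t ≤ hybridFLH N l u g t := by
  have hl' : ∀ n ∈ range N, 0 ≤ l n := fun n hn => (hl n (mem_range.1 hn)).le
  rw [FLH_eq_hybridFLH, hybridFLH_eq_sum_ramp hl, hybridFLH_eq_sum_ramp hl]
  exact sum_mul_ramp_faceStart_le (slopeKey_injective l u)
    (fun _ _ => div_le_div_of_slopeKey_le) hl' t (fun n hn => ramp_nonneg (hl' n hn))
    (fun n _ => ramp_le _ _ t) (sum_ramp_faceStart (slopeKey_injective l g) hl' t)

lemma hybridFLH_sub_hybridFLH_le (hl : ∀ n < N, 0 < l n) (u v g : ℕ → ℝ) (t : ℝ) :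
    hybridFLH N l u g t - hybridFLH N l v g t ≤ ∑ n ∈ range N, max (u n - v n) 0 := by
  rw [hybridFLH, hybridFLH, ← sum_sub_distrib]
  simp only [← sub_mul]
  exact sum_mul_le_sum_max_zero
    (fun n hn => le_min (div_nonneg (le_max_right _ _) (hl n (mem_range.1 hn)).le) zero_le_one)
    (fun n _ => min_le_right _ _)

end FLH

theorem FLH_comparison_general
    (T : ℝ) (N : ℕ) (l h h' : ℕ → ℝ)
    (hl : ∀ n < N, 0 < l n) :
    ∀ t ∈ Set.Icc (0 : ℝ) T,
      |FLH (N : ℕ∞) l h t - FLH (N : ℕ∞) l h' t|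
          ≤ max (∑ n ∈ Finset.range N, max (h n - h' n) 0)
              (∑ n ∈ Finset.range N, max (h' n - h n) 0) ∧
      |FLH (N : ℕ∞) l h' t -
          ∑ n ∈ Finset.range N, h n * min (max (t - leftPt (N : ℕ∞) l h' n) 0 / l n) 1|
          ≤ max (∑ n ∈ Finset.range N, max (h n - h' n) 0)
              (∑ n ∈ Finset.range N, max (h' n - h n) 0) := by
  intro t _
  change _ ∧ |_ - hybridFLH N l h h' t| ≤ _
  have hP := le_max_left (∑ n ∈ range N, max (h n - h' n) 0) (∑ n ∈ range N, max (h' n - h n) 0)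
  have hQ := le_max_right (∑ n ∈ range N, max (h n - h' n) 0) (∑ n ∈ range N, max (h' n - h n) 0)
  have hF := FLH_eq_hybridFLH (N := N) l h t
  have hF' := FLH_eq_hybridFLH (N := N) l h' t
  have hmin := FLH_le_hybridFLH hl h h' t
  have hmin' := FLH_le_hybridFLH hl h' h t
  have hd₁ := hybridFLH_sub_hybridFLH_le hl h h' h' t
  have hd₂ := hybridFLH_sub_hybridFLH_le hl h' h h t
  have hd₃ := hybridFLH_sub_hybridFLH_le hl h' h h' t
  exact ⟨abs_le.2 ⟨by linarith, by linarith⟩, abs_le.2 ⟨by linarith, by linarith⟩⟩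

/-- Lemma 1(b): comparison of the convex functions `F_{l,h}`, `F_{l,h'}` and of the hybrid
function `G_{l,h,h'}` (heights `h`, left endpoints from `h'`): the sup-norm distances
`‖F_{l,h} − F_{l,h'}‖_∞` and `‖F_{l,h'} − G_{l,h,h'}‖_∞` are bounded by
`max{Σ (h_n − h'_n)⁺, Σ (h'_n − h_n)⁺}`. -/
theorem FLH_comparison
    (T : ℝ) (hT : 0 < T) (N : ℕ) (l h h' : ℕ → ℝ)
    (hl : ∀ n < N, 0 < l n)
    (hlsum : ∑ n ∈ Finset.range N, l n = T) :
    ∀ t ∈ Set.Icc (0 : ℝ) T,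
      |FLH (N : ℕ∞) l h t - FLH (N : ℕ∞) l h' t|
          ≤ max (∑ n ∈ Finset.range N, max (h n - h' n) 0)
              (∑ n ∈ Finset.range N, max (h' n - h n) 0) ∧
      |FLH (N : ℕ∞) l h' t -
          ∑ n ∈ Finset.range N, h n * min (max (t - leftPt (N : ℕ∞) l h' n) 0 / l n) 1|
          ≤ max (∑ n ∈ Finset.range N, max (h n - h' n) 0)
              (∑ n ∈ Finset.range N, max (h' n - h n) 0) :=
  FLH_comparison_general T N l h h' hl

end
end

section
/- Let T > 0 and let (N_k)_{k≥1} be a sequence of positive integers converging to N_∞ ∈ ℕ. For each j ∈ ℕ ∪ {∞}, let (l_{j,n})_{n=1}^{N_j} be positive reals with Σ_{n=1}^{N_j} l_{j,n} = T, let (h_{j,n})_{n=1}^{N_j} be reals, and let C_j := F_{l_j, h_j} be the piecewise linear convex function on [0,T] built from these lengths and heights. If l_{k,n} → l_{∞,n} and h_{k,n} → h_{∞,n} as k → ∞ for every n ≤ N_∞, then ‖C_∞ − C_k‖_∞ → 0 as k → ∞, where ‖f‖_∞ := sup_{t∈[0,T]} |f(t)|. -/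
open Filter Set
open scoped ENNReal

noncomputable section

open scoped Classical

namespace FLHLem2

def Prec (l h : ℕ → ℝ) (k n : ℕ) : Prop :=
  h k / l k < h n / l n ∨ (h k / l k = h n / l n ∧ k < n)

lemma Prec.irrefl (l h : ℕ → ℝ) (n : ℕ) : ¬ Prec l h n n := by
  rintro (hlt | ⟨-, hlt⟩) <;> exact lt_irrefl _ hlt

lemma Prec.trans {l h : ℕ → ℝ} {a b c : ℕ} (h1 : Prec l h a b) (h2 : Prec l h b c) :
    Prec l h a c := by
  rcases h1 with h1 | ⟨e1, i1⟩ <;> rcases h2 with h2 | ⟨e2, i2⟩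
  · exact Or.inl (h1.trans h2)
  · exact Or.inl (e2 ▸ h1)
  · exact Or.inl (lt_of_le_of_lt e1.le h2)
  · exact Or.inr ⟨e1.trans e2, i1.trans i2⟩

lemma Prec.total {l h : ℕ → ℝ} {a b : ℕ} (hne : a ≠ b) : Prec l h a b ∨ Prec l h b a := by
  rcases lt_trichotomy (h a / l a) (h b / l b) with hl | he | hg
  · exact Or.inl (Or.inl hl)
  · rcases hne.lt_or_gt with hi | hi
    · exact Or.inl (Or.inr ⟨he, hi⟩)
    · exact Or.inr (Or.inr ⟨he.symm, hi⟩)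
  · exact Or.inr (Or.inl hg)

lemma Prec.sigma_le {l h : ℕ → ℝ} {a b : ℕ} (h1 : Prec l h a b) :
    h a / l a ≤ h b / l b := by
  rcases h1 with h1 | ⟨e1, -⟩
  · exact h1.le
  · exact e1.le

/-- left endpoint as a finite sum -/
def aF (N : ℕ) (l h : ℕ → ℝ) (n : ℕ) : ℝ :=
  ∑ k ∈ (Finset.range N).filter (fun k => Prec l h k n), l k

/-- affine minorant -/
def GF (N : ℕ) (l h : ℕ → ℝ) (n : ℕ) (t : ℝ) : ℝ :=
  h n / l n * t - ∑ k ∈ Finset.range N, l k * max (h n / l n - h k / l k) 0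

/-- the convex function, finite-sum form -/
def FF (N : ℕ) (l h : ℕ → ℝ) (t : ℝ) : ℝ :=
  ∑ n ∈ Finset.range N, h n * min (max (t - aF N l h n) 0 / l n) 1

/-- length used of face n at time t -/
def cF (N : ℕ) (l h : ℕ → ℝ) (n : ℕ) (t : ℝ) : ℝ :=
  min (max (t - aF N l h n) 0) (l n)

section Struct

variable {N : ℕ} {l h : ℕ → ℝ} {T : ℝ}
variable (hl : ∀ n ∈ Finset.range N, 0 < l n)

include hl

lemma aF_nonneg {n : ℕ} : 0 ≤ aF N l h n :=
  Finset.sum_nonneg fun k hk => (hl k (Finset.mem_filter.mp hk).1).le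

lemma aF_add_le {n m : ℕ} (hn : n ∈ Finset.range N) (hnm : Prec l h n m) :
    aF N l h n + l n ≤ aF N l h m := by
  have hni : n ∉ (Finset.range N).filter (fun k => Prec l h k n) := by
    simp [Prec.irrefl]
  have : aF N l h n + l n
      = ∑ k ∈ insert n ((Finset.range N).filter (fun k => Prec l h k n)), l k := by
    rw [Finset.sum_insert hni, aF]; ring
  rw [this, aF]
  refine Finset.sum_le_sum_of_subset_of_nonneg ?_ (fun k hk _ => (hl k (Finset.mem_filter.mp hk).1).le)
  intro k hk
  rcases Finset.mem_insert.mp hk with rfl | hk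
  · exact Finset.mem_filter.mpr ⟨hn, hnm⟩
  · have := Finset.mem_filter.mp hk
    exact Finset.mem_filter.mpr ⟨this.1, this.2.trans hnm⟩

lemma exists_face (hN : 0 < N) (hsum : ∑ n ∈ Finset.range N, l n = T)
    {t : ℝ} (ht : t ∈ Set.Icc (0:ℝ) T) :
    ∃ m ∈ Finset.range N, aF N l h m ≤ t ∧ t ≤ aF N l h m + l m := by
  classical
  -- first: some face has left endpoint 0
  have hne : (Finset.range N).Nonempty := ⟨0, Finset.mem_range.mpr hN⟩
  obtain ⟨n0, hn0, hn0min⟩ := Finset.exists_min_image (Finset.range N) (aF N l h) hne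
  have hn0zero : aF N l h n0 = 0 := by
    by_contra hz
    have hpos : ((Finset.range N).filter (fun k => Prec l h k n0)).Nonempty := by
      rw [Finset.filter_nonempty_iff]
      by_contra hc
      push_neg at hc
      exact hz (by rw [aF, Finset.sum_eq_zero]; intro k hk
                   exact absurd (Finset.mem_filter.mp hk).2 (hc k (Finset.mem_filter.mp hk).1))
    obtain ⟨k, hk⟩ := hpos
    obtain ⟨hkN, hkp⟩ := Finset.mem_filter.mp hk
    have h1 := aF_add_le hl hkN hkp
    have h2 := hn0min k hkN
    have := hl k hkN
    linarith
  set S := (Finset.range N).filter (fun n => aF N l h n ≤ t) with hS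
  have hSne : S.Nonempty := ⟨n0, Finset.mem_filter.mpr ⟨hn0, by rw [hn0zero]; exact ht.1⟩⟩
  obtain ⟨m, hmS, hmmax⟩ := Finset.exists_max_image S (aF N l h) hSne
  obtain ⟨hmN, hmle⟩ := Finset.mem_filter.mp hmS
  refine ⟨m, hmN, hmle, ?_⟩
  by_contra hgt
  push_neg at hgt
  rcases ((Finset.range N).filter (fun n => Prec l h m n)).eq_empty_or_nonempty with hUe | hUne
  · -- m is the last face: aF m + l m = T
    have hset : Finset.range N = insert m ((Finset.range N).filter (fun k => Prec l h k m)) := by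
      apply Finset.Subset.antisymm
      · intro k hk
        by_cases hkm : k = m
        · exact Finset.mem_insert.mpr (Or.inl hkm)
        · rcases Prec.total (l := l) (h := h) hkm with hp | hp
          · exact Finset.mem_insert.mpr (Or.inr (Finset.mem_filter.mpr ⟨hk, hp⟩))
          · exact absurd (Finset.mem_filter.mpr ⟨hk, hp⟩) (by rw [hUe]; exact Finset.notMem_empty k)
      · intro k hk
        rcases Finset.mem_insert.mp hk with rfl | hk
        · exact hmN
        · exact (Finset.mem_filter.mp hk).1
    have hmi : m ∉ (Finset.range N).filter (fun k => Prec l h k m) := by simp [Prec.irrefl]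
    have : T = l m + aF N l h m := by
      rw [← hsum, hset, Finset.sum_insert hmi, aF]
    have := ht.2
    linarith
  · obtain ⟨n, hnU, hnmin⟩ := Finset.exists_min_image _ (aF N l h) hUne
    obtain ⟨hnN, hmn⟩ := Finset.mem_filter.mp hnU
    have hsub : (Finset.range N).filter (fun k => Prec l h k n)
        ⊆ insert m ((Finset.range N).filter (fun k => Prec l h k m)) := by
      intro k hk
      obtain ⟨hkN, hkn⟩ := Finset.mem_filter.mp hk
      by_cases hkm : k = m
      · exact Finset.mem_insert.mpr (Or.inl hkm)
      rcases Prec.total (l := l) (h := h) hkm with hp | hp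
      · exact Finset.mem_insert.mpr (Or.inr (Finset.mem_filter.mpr ⟨hkN, hp⟩))
      · exfalso
        have hkU := Finset.mem_filter.mpr ⟨hkN, hp⟩
        have h1 := aF_add_le hl hkN hkn
        have h2 := hnmin k hkU
        have := hl k hkN
        linarith
    have hmi : m ∉ (Finset.range N).filter (fun k => Prec l h k m) := by simp [Prec.irrefl]
    have h1 : aF N l h n ≤ aF N l h m + l m := by
      rw [aF]
      calc ∑ k ∈ (Finset.range N).filter (fun k => Prec l h k n), l k
          ≤ ∑ k ∈ insert m ((Finset.range N).filter (fun k => Prec l h k m)), l k :=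
            Finset.sum_le_sum_of_subset_of_nonneg hsub
              (fun k hk _ => (hl k (by
                rcases Finset.mem_insert.mp hk with rfl | hk'
                · exact hmN
                · exact (Finset.mem_filter.mp hk').1)).le)
        _ = aF N l h m + l m := by rw [Finset.sum_insert hmi, aF]; ring
    have hnS : n ∈ S := Finset.mem_filter.mpr ⟨hnN, by linarith⟩
    have h2 := hmmax n hnS
    have h3 := aF_add_le hl hmN hmn
    have := hl m hmN
    linarith

omit hl in
lemma cF_le {n : ℕ} {t : ℝ} : cF N l h n t ≤ l n := min_le_right _ _

lemma cF_nonneg {n : ℕ} {t : ℝ} (hn : n ∈ Finset.range N) : 0 ≤ cF N l h n t :=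
  le_min (le_max_right _ _) (hl n hn).le

lemma cF_eq_of_prec {n m : ℕ} {t : ℝ} (hn : n ∈ Finset.range N)
    (hp : Prec l h n m) (hmt : aF N l h m ≤ t) : cF N l h n t = l n := by
  have h1 : aF N l h n + l n ≤ t := (aF_add_le hl hn hp).trans hmt
  have h2 : 0 ≤ aF N l h n := aF_nonneg hl
  have h3 := hl n hn
  rw [cF, max_eq_left (by linarith), min_eq_right (by linarith)]

lemma cF_eq_zero_of_prec {n m : ℕ} {t : ℝ} (hn : n ∈ Finset.range N)
    (hm : m ∈ Finset.range N) (hp : Prec l h m n) (hmt : t ≤ aF N l h m + l m) :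
    cF N l h n t = 0 := by
  have h1 : aF N l h m + l m ≤ aF N l h n := aF_add_le hl hm hp
  rw [cF, max_eq_right (by linarith), min_eq_left (hl n hn).le]

omit hl in
lemma cF_self {m : ℕ} {t : ℝ} (h1 : aF N l h m ≤ t) (h2 : t ≤ aF N l h m + l m) :
    cF N l h m t = t - aF N l h m := by
  rw [cF, max_eq_left (by linarith), min_eq_left (by linarith)]

lemma sum_cF (hN : 0 < N) (hsum : ∑ n ∈ Finset.range N, l n = T)
    {t : ℝ} (ht : t ∈ Set.Icc (0:ℝ) T) :
    ∑ n ∈ Finset.range N, cF N l h n t = t := by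
  obtain ⟨m, hmN, hm1, hm2⟩ := exists_face hl hN hsum ht
  have hmi : m ∉ (Finset.range N).filter (fun k => Prec l h k m) := by simp [Prec.irrefl]
  have hsub : insert m ((Finset.range N).filter (fun k => Prec l h k m)) ⊆ Finset.range N := by
    intro k hk
    rcases Finset.mem_insert.mp hk with rfl | hk
    · exact hmN
    · exact (Finset.mem_filter.mp hk).1
  rw [← Finset.sum_subset hsub (fun n hnN hni => ?_)]
  · rw [Finset.sum_insert hmi, cF_self (l := l) (h := h) hm1 hm2,
      Finset.sum_congr rfl (fun k hk => cF_eq_of_prec hl (Finset.mem_filter.mp hk).1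
        (Finset.mem_filter.mp hk).2 hm1)]
    have : ∑ k ∈ (Finset.range N).filter (fun k => Prec l h k m), l k = aF N l h m := rfl
    rw [this]; ring
  · have hnm : n ≠ m := fun e => hni (by rw [e]; exact Finset.mem_insert_self m _)
    rcases Prec.total (l := l) (h := h) hnm with hp | hp
    · exact absurd (show n ∈ insert m ((Finset.range N).filter (fun k => Prec l h k m)) from
        Finset.mem_insert.mpr (Or.inr (Finset.mem_filter.mpr ⟨hnN, hp⟩))) hni
    · exact cF_eq_zero_of_prec hl hnN hmN hp hm2

lemma FF_eq_sum {t : ℝ} : FF N l h t = ∑ n ∈ Finset.range N, h n / l n * cF N l h n t := by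
  refine Finset.sum_congr rfl (fun n hn => ?_)
  have hln := hl n hn
  have : min (max (t - aF N l h n) 0 / l n) 1 = cF N l h n t / l n := by
    rw [cF, ← min_div_div_right hln.le, div_self hln.ne']
  rw [this]; ring

lemma FF_sub_GF (hN : 0 < N) (hsum : ∑ n ∈ Finset.range N, l n = T)
    {t : ℝ} (ht : t ∈ Set.Icc (0:ℝ) T) (m : ℕ) :
    FF N l h t - GF N l h m t = ∑ n ∈ Finset.range N,
      (h n / l n * cF N l h n t - h m / l m * cF N l h n t
        + l n * max (h m / l m - h n / l n) 0) := by
  rw [FF_eq_sum hl, GF, Finset.sum_add_distrib, Finset.sum_sub_distrib,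
    ← Finset.mul_sum, sum_cF hl hN hsum ht]
  ring

lemma GF_le_FF (hN : 0 < N) (hsum : ∑ n ∈ Finset.range N, l n = T)
    {t : ℝ} (ht : t ∈ Set.Icc (0:ℝ) T) {m : ℕ} :
    GF N l h m t ≤ FF N l h t := by
  have h0 : 0 ≤ FF N l h t - GF N l h m t := by
    rw [FF_sub_GF hl hN hsum ht m]
    refine Finset.sum_nonneg (fun n hn => ?_)
    rcases le_or_gt (h m / l m) (h n / l n) with hle | hlt
    · rw [max_eq_right (by linarith)]
      nlinarith [mul_nonneg (sub_nonneg.mpr hle) (cF_nonneg (h := h) (t := t) hl hn)]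
    · rw [max_eq_left (by linarith)]
      nlinarith [mul_nonneg (sub_nonneg.mpr hlt.le)
        (sub_nonneg.mpr (cF_le (N := N) (l := l) (h := h) (n := n) (t := t)))]
  linarith

lemma FF_eq_GF_face (hN : 0 < N) (hsum : ∑ n ∈ Finset.range N, l n = T)
    {t : ℝ} (ht : t ∈ Set.Icc (0:ℝ) T) {m : ℕ} (hmN : m ∈ Finset.range N)
    (h1 : aF N l h m ≤ t) (h2 : t ≤ aF N l h m + l m) :
    FF N l h t = GF N l h m t := by
  have h0 : FF N l h t - GF N l h m t = 0 := by
    rw [FF_sub_GF hl hN hsum ht m]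
    refine Finset.sum_eq_zero (fun n hn => ?_)
    by_cases hnm : n = m
    · subst hnm; simp
    rcases Prec.total (l := l) (h := h) hnm with hp | hp
    · rw [cF_eq_of_prec hl hn hp h1, max_eq_left (sub_nonneg.mpr (Prec.sigma_le hp))]
      ring
    · rw [cF_eq_zero_of_prec hl hn hmN hp h2,
        max_eq_right (sub_nonpos.mpr (Prec.sigma_le hp))]
      ring
  linarith

lemma FF_eq_sup (hN : 0 < N) (hsum : ∑ n ∈ Finset.range N, l n = T)
    {t : ℝ} (ht : t ∈ Set.Icc (0:ℝ) T) :
    FF N l h t = (Finset.range N).sup' ⟨0, Finset.mem_range.mpr hN⟩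
      (fun n => GF N l h n t) := by
  refine le_antisymm ?_ (Finset.sup'_le _ (fun n => GF N l h n t) (fun m _ => GF_le_FF hl hN hsum ht))
  obtain ⟨m, hmN, h1, h2⟩ := exists_face hl hN hsum ht
  rw [FF_eq_GF_face hl hN hsum ht hmN h1 h2]
  exact Finset.le_sup' (fun n => GF N l h n t) hmN

end Struct

lemma leftPt_eq {N : ℕ} (l h : ℕ → ℝ) {n : ℕ} (hn : n < N) :
    leftPt (N : ℕ∞) l h n = aF N l h n := by
  classical
  have h1 : (∑' k : ℕ, if (k : ℕ∞) < (N : ℕ∞) ∧ h k / l k < h n / l n then l k else 0)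
      = ∑ k ∈ Finset.range N, (if h k / l k < h n / l n then l k else 0) := by
    rw [tsum_eq_sum (s := Finset.range N) (fun k hk => by
      rw [if_neg]; rintro ⟨hc, -⟩
      exact hk (Finset.mem_range.mpr (Nat.cast_lt.mp hc)))]
    refine Finset.sum_congr rfl (fun k hk => ?_)
    have hkN : (k : ℕ∞) < (N : ℕ∞) := Nat.cast_lt.mpr (Finset.mem_range.mp hk)
    by_cases h2 : h k / l k < h n / l n
    · rw [if_pos ⟨hkN, h2⟩, if_pos h2]
    · rw [if_neg (fun c => h2 c.2), if_neg h2]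
  have h2 : (∑ k ∈ Finset.range n, (if (k : ℕ∞) < (N : ℕ∞) ∧ h k / l k = h n / l n
        then l k else 0))
      = ∑ k ∈ Finset.range n, (if h k / l k = h n / l n then l k else 0) := by
    refine Finset.sum_congr rfl (fun k hk => ?_)
    have hkN : (k : ℕ∞) < (N : ℕ∞) :=
      Nat.cast_lt.mpr ((Finset.mem_range.mp hk).trans hn)
    by_cases h2 : h k / l k = h n / l n
    · rw [if_pos ⟨hkN, h2⟩, if_pos h2]
    · rw [if_neg (fun c => h2 c.2), if_neg h2]
  rw [leftPt, h1, h2, aF, Finset.sum_filter]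
  have h3 : ∑ k ∈ Finset.range n, (if h k / l k = h n / l n then l k else 0)
      = ∑ k ∈ Finset.range N, (if h k / l k = h n / l n ∧ k < n then l k else 0) := by
    have e1 : ∑ k ∈ Finset.range n, (if h k / l k = h n / l n then l k else 0)
        = ∑ k ∈ Finset.range n, (if h k / l k = h n / l n ∧ k < n then l k else 0) := by
      refine Finset.sum_congr rfl (fun k hk => ?_)
      have hk' := Finset.mem_range.mp hk
      by_cases h2 : h k / l k = h n / l n
      · rw [if_pos h2, if_pos ⟨h2, hk'⟩]
      · rw [if_neg h2, if_neg (fun c => h2 c.1)]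
    rw [e1]
    exact Finset.sum_subset (Finset.range_subset_range.mpr hn.le)
      (fun k hkN hkn => by rw [if_neg (fun c => hkn (Finset.mem_range.mpr c.2))])
  rw [h3, ← Finset.sum_add_distrib]
  refine Finset.sum_congr rfl (fun k hk => ?_)
  by_cases hlt : h k / l k < h n / l n
  · rw [if_pos hlt, if_neg (fun c => absurd c.1 hlt.ne), if_pos (show Prec l h k n from Or.inl hlt)]
    ring
  · by_cases heq : h k / l k = h n / l n ∧ k < n
    · rw [if_neg hlt, if_pos heq, if_pos (show Prec l h k n from Or.inr heq)]
      ring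
    · rw [if_neg hlt, if_neg heq, if_neg (fun c : Prec l h k n => c.elim hlt heq)]
      ring

lemma FLH_eq_FF (N : ℕ) (l h : ℕ → ℝ) (t : ℝ) :
    FLH (N : ℕ∞) l h t = FF N l h t := by
  classical
  rw [FLH, tsum_eq_sum (s := Finset.range N) (fun n hn => by
    rw [if_neg (fun hc => hn (Finset.mem_range.mpr (Nat.cast_lt.mp hc)))])]
  refine Finset.sum_congr rfl (fun n hn => ?_)
  have hn' := Finset.mem_range.mp hn
  rw [if_pos (Nat.cast_lt.mpr hn'), leftPt_eq l h hn']

lemma abs_sup'_sub_sup'_le {α : Type*} {s : Finset α} (hs : s.Nonempty) (f g : α → ℝ)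
    {B : ℝ} (hB : ∀ n ∈ s, |f n - g n| ≤ B) :
    |s.sup' hs f - s.sup' hs g| ≤ B := by
  have h1 : s.sup' hs f ≤ s.sup' hs g + B := Finset.sup'_le _ _ (fun n hn => by
    have ha := abs_le.mp (hB n hn)
    have hb := Finset.le_sup' g hn
    linarith [ha.2])
  have h2 : s.sup' hs g ≤ s.sup' hs f + B := Finset.sup'_le _ _ (fun n hn => by
    have ha := abs_le.mp (hB n hn)
    have hb := Finset.le_sup' f hn
    linarith [ha.1])
  rw [abs_le]
  constructor <;> linarith

end FLHLem2

open FLHLem2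

/-- Lemma 2: convergence of piecewise linear convex functions with finitely many faces. If the
numbers of faces converge, and all lengths and heights converge, then the functions converge
uniformly on `[0,T]`. -/
theorem FLH_tendstoUniformlyOn
    (T : ℝ) (hT : 0 < T)
    (Nk : ℕ → ℕ) (Ninf : ℕ) (hNinf : 0 < Ninf) (hNk : ∀ k, 0 < Nk k)
    (hNconv : Tendsto Nk atTop (nhds Ninf))
    (l h : ℕ → ℕ → ℝ) (li hi : ℕ → ℝ)
    (hlpos : ∀ k, ∀ n < Nk k, 0 < l k n)
    (hlipos : ∀ n < Ninf, 0 < li n)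
    (hlsum : ∀ k, ∑ n ∈ Finset.range (Nk k), l k n = T)
    (hlisum : ∑ n ∈ Finset.range Ninf, li n = T)
    (hlconv : ∀ n < Ninf, Tendsto (fun k => l k n) atTop (nhds (li n)))
    (hhconv : ∀ n < Ninf, Tendsto (fun k => h k n) atTop (nhds (hi n))) :
    TendstoUniformlyOn (fun k => FLH (Nk k : ℕ∞) (l k) (h k))
      (FLH (Ninf : ℕ∞) li hi) atTop (Set.Icc (0 : ℝ) T) := by
  classical
  have hσconv : ∀ n < Ninf, Tendsto (fun k => h k n / l k n) atTop (nhds (hi n / li n)) :=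
    fun n hn => (hhconv n hn).div (hlconv n hn) (hlipos n hn).ne'
  set D : ℕ → ℝ := fun k => ∑ n ∈ Finset.range Ninf,
      (|h k n / l k n - hi n / li n| * T
        + ∑ j ∈ Finset.range Ninf,
            |l k j * max (h k n / l k n - h k j / l k j) 0
              - li j * max (hi n / li n - hi j / li j) 0|) with hDdef
  have hDconv : Tendsto D atTop (nhds 0) := by
    have h0 : Tendsto D atTop (nhds (∑ n ∈ Finset.range Ninf,
        ((0:ℝ) + ∑ _j ∈ Finset.range Ninf, (0:ℝ)))) := by
      apply tendsto_finset_sum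
      intro n hn
      have hn' := Finset.mem_range.mp hn
      apply Tendsto.add
      · have h1 : Tendsto (fun k => |h k n / l k n - hi n / li n| * T) atTop
            (nhds (|hi n / li n - hi n / li n| * T)) :=
          (((hσconv n hn').sub tendsto_const_nhds).abs).mul_const T
        simpa using h1
      · apply tendsto_finset_sum
        intro j hj
        have hj' := Finset.mem_range.mp hj
        have h1 : Tendsto (fun k => |l k j * max (h k n / l k n - h k j / l k j) 0
              - li j * max (hi n / li n - hi j / li j) 0|) atTop
            (nhds (|li j * max (hi n / li n - hi j / li j) 0
              - li j * max (hi n / li n - hi j / li j) 0|)) :=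
          ((((hlconv j hj').mul (((hσconv n hn').sub (hσconv j hj')).max
            tendsto_const_nhds)).sub tendsto_const_nhds).abs)
        simpa using h1
    simpa using h0
  have hNeq : ∀ᶠ k in atTop, Nk k = Ninf := by
    have h1 : {Ninf} ∈ nhds Ninf := (isOpen_discrete ({Ninf} : Set ℕ)).mem_nhds rfl
    filter_upwards [hNconv h1] with k hk using hk
  rw [Metric.tendstoUniformlyOn_iff]
  intro ε hε
  filter_upwards [hNeq, hDconv (Iio_mem_nhds hε)] with k hk1 hk2
  intro t ht
  rw [Real.dist_eq, hk1]
  have hlinf : ∀ n ∈ Finset.range Ninf, 0 < li n :=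
    fun n hn => hlipos n (Finset.mem_range.mp hn)
  have hlk : ∀ n ∈ Finset.range Ninf, 0 < l k n :=
    fun n hn => hlpos k n (by rw [hk1]; exact Finset.mem_range.mp hn)
  have hsumk : ∑ n ∈ Finset.range Ninf, l k n = T := by rw [← hk1]; exact hlsum k
  rw [FLH_eq_FF, FLH_eq_FF,
    FF_eq_sup hlinf hNinf hlisum ht, FF_eq_sup hlk hNinf hsumk ht]
  refine lt_of_le_of_lt (abs_sup'_sub_sup'_le _ _ _ (fun n hn => ?_)) hk2
  -- per-face bound
  have hn' := Finset.mem_range.mp hn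
  have hdiff : GF Ninf li hi n t - GF Ninf (l k) (h k) n t
      = (hi n / li n - h k n / l k n) * t
        + ∑ j ∈ Finset.range Ninf,
            (l k j * max (h k n / l k n - h k j / l k j) 0
              - li j * max (hi n / li n - hi j / li j) 0) := by
    rw [GF, GF, Finset.sum_sub_distrib]
    ring
  have habs : |t| ≤ T := abs_le.mpr ⟨by linarith [ht.1], ht.2⟩
  calc |GF Ninf li hi n t - GF Ninf (l k) (h k) n t|
      ≤ |(hi n / li n - h k n / l k n) * t|
        + |∑ j ∈ Finset.range Ninf,
            (l k j * max (h k n / l k n - h k j / l k j) 0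
              - li j * max (hi n / li n - hi j / li j) 0)| := by
        rw [hdiff]; exact abs_add_le _ _
    _ ≤ |h k n / l k n - hi n / li n| * T
        + ∑ j ∈ Finset.range Ninf,
            |l k j * max (h k n / l k n - h k j / l k j) 0
              - li j * max (hi n / li n - hi j / li j) 0| := by
        refine add_le_add ?_ (Finset.abs_sum_le_sum_abs _ _)
        rw [abs_mul, abs_sub_comm]
        exact mul_le_mul_of_nonneg_left habs (abs_nonneg _)
    _ ≤ D k := by
        refine Finset.single_le_sum (f := fun n => |h k n / l k n - hi n / li n| * T
          + ∑ j ∈ Finset.range Ninf,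
            |l k j * max (h k n / l k n - h k j / l k j) 0
              - li j * max (hi n / li n - hi j / li j) 0|) (fun i _ => ?_) hn
        exact add_nonneg (mul_nonneg (abs_nonneg _) hT.le)
          (Finset.sum_nonneg (fun j _ => abs_nonneg _))


end
end

section
/- Let x_1, …, x_n be real numbers such that no two distinct nonempty subsets of {x_1,…,x_n} have the same arithmetic mean. Then there exists a unique k* ∈ {1,…,n} such that for every k ∈ {1,…,n}, Σ_{i=1}^k x_{((k*+i−1) mod n)+1} ≥ (k/n) Σ_{i=1}^n x_i; that is, the walk whose increments are the cyclic shift of (x_1,…,x_n) starting after position k* stays (weakly) above the straight line joining 0 to Σ_{i=1}^n x_i. -/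
/-!
Centre the increments: with `μ` the mean of the `x i`, let `S m = ∑_{i < m} (x (i mod n) - μ)`.
The condition on `kstar` says `S kstar ≤ S (kstar + k)` for `1 ≤ k ≤ n`, and since `S` has
period `n` (the centred increments sum to zero) this says that `S` attains its global minimum at
`kstar`. For `0 ≤ i < j < n`, `S j - S i` is the sum of `x` over the proper subset
`{i, …, j - 1}` minus its size times `μ`, which is nonzero because no proper nonempty subset has
mean `μ`. So `S` takes distinct values on a period, and its minimum is attained at exactly one
point of `{1, …, n}`.
-/

open Finset Function

theorem Function.Periodic.sum_range_of_sum_eq_zero {M : Type*} [AddCommMonoid M] {y : ℕ → M}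
    {n : ℕ} (hy : Periodic y n) (hsum : ∑ i ∈ range n, y i = 0) :
    Periodic (fun m => ∑ i ∈ range m, y i) n := by
  intro m
  induction m with
  | zero => simpa using hsum
  | succ m ih =>
    simp only [Nat.add_right_comm m 1 n, sum_range_succ, ih, hy m]

theorem Function.Periodic.eq_of_modEq {α : Type*} {f : ℕ → α} {n a b : ℕ} (hf : Periodic f n)
    (h : a ≡ b [MOD n]) : f a = f b := by
  rw [← hf.map_mod_nat a, ← hf.map_mod_nat b, show a % n = b % n from h]

theorem ZMod.exists_mem_Icc_natCast_eq {n : ℕ} [NeZero n] (a : ZMod n) :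
    ∃ r ∈ Icc 1 n, (r : ZMod n) = a := by
  by_cases ha : a = 0
  · exact ⟨n, mem_Icc.2 ⟨NeZero.one_le, le_rfl⟩, by rw [ZMod.natCast_self, ha]⟩
  · refine ⟨a.val, mem_Icc.2 ⟨?_, (ZMod.val_lt a).le⟩, ZMod.natCast_zmod_val a⟩
    exact Nat.one_le_iff_ne_zero.2 ((ZMod.val_ne_zero a).2 ha)

section PeriodicMinimum

variable {α : Type*} {n : ℕ} {S : ℕ → α}

theorem Function.Periodic.forall_le_add_Icc_iff [Preorder α] [NeZero n] (hS : Periodic S n)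
    (k : ℕ) :
    (∀ j ∈ Icc 1 n, S k ≤ S (k + j)) ↔ ∀ m, S k ≤ S m := by
  refine ⟨fun h m => ?_, fun h j _ => h _⟩
  obtain ⟨j, hj, hjm⟩ := ZMod.exists_mem_Icc_natCast_eq ((m : ZMod n) - (k : ZMod n))
  have hmod : k + j ≡ m [MOD n] := by
    rw [← ZMod.natCast_eq_natCast_iff, Nat.cast_add, hjm, add_sub_cancel]
  exact (h j hj).trans_eq (hS.eq_of_modEq hmod)

theorem Function.Periodic.existsUnique_mem_Icc_forall_le_add [LinearOrder α] [NeZero n]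
    (hS : Periodic S n) (hS_eq : ∀ a b, S a = S b → a ≡ b [MOD n]) :
    ∃! k, k ∈ Icc 1 n ∧ ∀ j ∈ Icc 1 n, S k ≤ S (k + j) := by
  simp only [hS.forall_le_add_Icc_iff]
  obtain ⟨p, hp, hp_min⟩ := exists_min_image (Icc 1 n) S
    ⟨n, mem_Icc.2 ⟨NeZero.one_le, le_rfl⟩⟩
  refine ⟨p, ⟨hp, fun m => ?_⟩, fun k ⟨hk, hk_min⟩ => ?_⟩
  · obtain ⟨r, hr, hrm⟩ := ZMod.exists_mem_Icc_natCast_eq (m : ZMod n)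
    exact (hp_min r hr).trans_eq (hS.eq_of_modEq ((ZMod.natCast_eq_natCast_iff _ _ _).1 hrm))
  · have hmod := hS_eq k p (le_antisymm (hk_min p) (hp_min k hk))
    rw [mem_Icc] at hk hp
    exact hmod.eq_of_abs_lt (by rw [abs_lt]; omega)

end PeriodicMinimum

section CenteredWalk

variable {n : ℕ} [NeZero n] (x : Fin n → ℝ)

noncomputable def centeredWalk (m : ℕ) : ℝ :=
  ∑ i ∈ range m, (x (Fin.ofNat n i) - (∑ j, x j) / n)

def HasDistinctSubsetMeans : Prop :=
  ∀ A B : Finset (Fin n), A.Nonempty → B.Nonempty → A ≠ B →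
    (∑ i ∈ A, x i) / (#A : ℝ) ≠ (∑ i ∈ B, x i) / (#B : ℝ)

theorem periodic_centeredWalk : Periodic (centeredWalk x) n := by
  refine Periodic.sum_range_of_sum_eq_zero (fun i => ?_) ?_
  · simp only [Fin.ofNat, Nat.add_mod_right]
  · rw [sum_sub_distrib, ← Fin.sum_univ_eq_sum_range (fun i => x (Fin.ofNat n i))]
    simp only [Fin.ofNat_val_eq_self, sum_const, card_range, nsmul_eq_mul]
    rw [mul_div_cancel₀ _ (Nat.cast_ne_zero.2 (NeZero.ne n)), sub_self]

theorem le_sum_Icc_iff_centeredWalk_le (a k : ℕ) :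
    (k : ℝ) / n * ∑ i, x i ≤ ∑ i ∈ Icc 1 k, x (Fin.ofNat n (a + i - 1)) ↔
      centeredWalk x a ≤ centeredWalk x (a + k) := by
  have hshift : ∑ i ∈ Icc 1 k, x (Fin.ofNat n (a + i - 1)) =
      ∑ i ∈ range k, x (Fin.ofNat n (a + i)) := by
    rw [← Ico_add_one_right_eq_Icc, sum_Ico_eq_sum_range, Nat.add_sub_cancel]
    refine sum_congr rfl fun i _ => ?_
    rw [show a + (1 + i) - 1 = a + i by omega]
  have hwalk : centeredWalk x (a + k) = centeredWalk x a +
      (∑ i ∈ range k, x (Fin.ofNat n (a + i)) - k * ((∑ j, x j) / n)) := by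
    rw [centeredWalk, sum_range_add, sum_sub_distrib (s := range k), sum_const, card_range,
      nsmul_eq_mul]
    rfl
  rw [hshift, hwalk, mul_comm_div]
  constructor <;> intro h <;> linarith

theorem centeredWalk_sub_centeredWalk {i j : Fin n} (hij : i ≤ j) :
    centeredWalk x j - centeredWalk x i =
      ∑ l ∈ Ico i j, x l - #(Ico i j) * ((∑ l, x l) / n) := by
  rw [centeredWalk, centeredWalk, ← sum_Ico_eq_sub _ hij, ← Fin.map_valEmbedding_Ico, sum_map,
    sum_sub_distrib, sum_const, nsmul_eq_mul]
  simp only [Fin.valEmbedding_apply, Fin.ofNat_val_eq_self]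

variable {x}

theorem HasDistinctSubsetMeans.sum_ne_card_mul_mean (hx : HasDistinctSubsetMeans x)
    {A : Finset (Fin n)} (hA : A.Nonempty) (hA_ne : A ≠ univ) :
    ∑ i ∈ A, x i ≠ #A * ((∑ j, x j) / n) := by
  intro h
  apply hx A univ hA univ_nonempty hA_ne
  rw [h, card_univ, Fintype.card_fin, mul_div_cancel_left₀ _ (Nat.cast_ne_zero.2 hA.card_pos.ne')]

theorem HasDistinctSubsetMeans.modEq_of_centeredWalk_eq (hx : HasDistinctSubsetMeans x)
    {a b : ℕ} (h : centeredWalk x a = centeredWalk x b) : a ≡ b [MOD n] := by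
  have hne : ∀ i j : Fin n, i < j → centeredWalk x i ≠ centeredWalk x j := fun i j hij hw =>
    hx.sum_ne_card_mul_mean (nonempty_Ico.2 hij) (fun hu => right_notMem_Ico (hu ▸ mem_univ j))
      (sub_eq_zero.1 ((centeredWalk_sub_centeredWalk x hij.le).symm.trans (sub_eq_zero.2 hw.symm)))
  have hval : ∀ m, centeredWalk x (Fin.ofNat n m) = centeredWalk x m := fun m => by
    rw [Fin.val_ofNat, (periodic_centeredWalk x).map_mod_nat]
  have hab : Fin.ofNat n a = Fin.ofNat n b := by
    by_contra hab
    rcases lt_or_gt_of_ne hab with hlt | hlt <;> exact hne _ _ hlt (by rw [hval, hval, h])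
  simpa only [Nat.ModEq, Fin.val_ofNat] using congrArg Fin.val hab

end CenteredWalk

/-- Lemma 3: if no two distinct nonempty subsets of `x 0, …, x (n-1)` have the same arithmetic
mean, then there is a unique cyclic shift of the increments after which the walk stays weakly
above the straight line joining `0` to the total sum. -/
theorem unique_cyclic_shift_above_chord
    (n : ℕ) (hn : 0 < n) (x : Fin n → ℝ)
    (hmeans : ∀ A B : Finset (Fin n), A.Nonempty → B.Nonempty → A ≠ B →
      (∑ i ∈ A, x i) / (A.card : ℝ) ≠ (∑ i ∈ B, x i) / (B.card : ℝ)) :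
    ∃! kstar : ℕ, kstar ∈ Finset.Icc 1 n ∧
      ∀ k ∈ Finset.Icc 1 n,
        (k : ℝ) / (n : ℝ) * ∑ i, x i
          ≤ ∑ i ∈ Finset.Icc 1 k, x ⟨(kstar + i - 1) % n, Nat.mod_lt _ hn⟩ := by
  have : NeZero n := ⟨hn.ne'⟩
  -- the statement's `⟨m % n, _⟩` is `Fin.ofNat n m`
  simp only [← Fin.ofNat.eq_def, le_sum_Icc_iff_centeredWalk_le]
  exact (periodic_centeredWalk x).existsUnique_mem_Icc_forall_le_add
    fun _ _ => HasDistinctSubsetMeans.modEq_of_centeredWalk_eq hmeans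
end
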